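/- Let K = [[K₁₁, K₁₂],[K₂₁, K₂₂]] be a symmetric positive definite 2n×2n block Gram matrix, u, v ∈ ℝⁿ, λ > 0. Define the quadratic objective over (β, γ) ∈ ℝⁿ×ℝⁿ: R(β,γ) = βᵀK₁₂K₂₁β + βᵀK₁₂K₂₂γ + γᵀK₂₂K₂₁β + γᵀK₂₂²γ + 2(βᵀK₁₂v + γᵀK₂₂v + βᵀK₁₁u + γᵀK₂₁u) + λ(βᵀK₁₁β + 2βᵀK₁₂γ + γᵀK₂₂γ). Then its gradient is ∇R = 2K · (u + λβ; K₂₁β + K₂₂γ + v + λγ), and since K is invertible, the unique stationary point is β̂ = -u/λ, γ̂ = -(K₂₂ + λI)⁻¹(K₂₁β̂ + v). -/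

import Mathlib

open Matrix

variable {n : ℕ}

noncomputable def dotCLM (M : Matrix (Fin n) (Fin n) ℝ) :
    (Fin n → ℝ) →L[ℝ] (Fin n → ℝ) →L[ℝ] ℝ :=
  LinearMap.toContinuousLinearMap
    { toFun := fun x => LinearMap.toContinuousLinearMap
        { toFun := fun y => x ⬝ᵥ M.mulVec y
          map_add' := by intro y z; simp [Matrix.mulVec_add, dotProduct_add]
          map_smul' := by intro c y; simp [Matrix.mulVec_smul] }
      map_add' := by intro x z; ext y; simp [add_dotProduct]
      map_smul' := by intro c x; ext y; simp [smul_dotProduct] }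

@[simp] lemma dotCLM_apply (M : Matrix (Fin n) (Fin n) ℝ) (x y : Fin n → ℝ) :
    dotCLM M x y = x ⬝ᵥ M.mulVec y := rfl

noncomputable def dotC (w : Fin n → ℝ) : (Fin n → ℝ) →L[ℝ] ℝ :=
  LinearMap.toContinuousLinearMap
    { toFun := fun x => x ⬝ᵥ w
      map_add' := by intro x z; simp [add_dotProduct]
      map_smul' := by intro c x; simp [smul_dotProduct] }

@[simp] lemma dotC_apply (w x : Fin n → ℝ) : dotC w x = x ⬝ᵥ w := rfl

lemma hasFDerivAt_dotfg (M : Matrix (Fin n) (Fin n) ℝ)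
    (f g : ((Fin n → ℝ) × (Fin n → ℝ)) →L[ℝ] (Fin n → ℝ))
    (p : (Fin n → ℝ) × (Fin n → ℝ)) :
    HasFDerivAt (fun q => f q ⬝ᵥ M.mulVec (g q))
      ((((dotCLM M).isBoundedBilinearMap).deriv (f p, g p)).comp (f.prod g)) p :=
  (((dotCLM M).isBoundedBilinearMap).hasFDerivAt ((f.prod g) p)).comp p
      ((f.prod g).hasFDerivAt)

lemma flip_dot (M : Matrix (Fin n) (Fin n) ℝ) (x y : Fin n → ℝ) :
    x ⬝ᵥ M *ᵥ y = y ⬝ᵥ Mᵀ *ᵥ x := by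
  rw [Matrix.dotProduct_mulVec, ← Matrix.mulVec_transpose, dotProduct_comm]

set_option maxHeartbeats 2000000 in
/-- Closed-form solution of the kernel ridge regression with the data-fusion
Neyman-orthogonal loss: the regularized empirical risk is quadratic in the
representer coefficients `(β, γ)`; its gradient is `2K·(u + λβ; K₂₁β + K₂₂γ + v + λγ)`,
and since `K` is invertible the unique stationary point is
`β̂ = -u/λ`, `γ̂ = -(K₂₂ + λI)⁻¹(K₂₁β̂ + v)`. -/
theorem krr_closed_form (n : ℕ)
    (K11 K12 K21 K22 : Matrix (Fin n) (Fin n) ℝ)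
    (hsymm : (Matrix.fromBlocks K11 K12 K21 K22).IsSymm)
    (hposdef : (Matrix.fromBlocks K11 K12 K21 K22).PosDef)
    (u v : Fin n → ℝ) (lam : ℝ) (hlam : 0 < lam)
    (R : (Fin n → ℝ) × (Fin n → ℝ) → ℝ)
    (hR : ∀ β γ : Fin n → ℝ, R (β, γ) =
      β ⬝ᵥ (K12 * K21).mulVec β + β ⬝ᵥ (K12 * K22).mulVec γ
        + γ ⬝ᵥ (K22 * K21).mulVec β + γ ⬝ᵥ (K22 * K22).mulVec γ
        + 2 * (β ⬝ᵥ K12.mulVec v + γ ⬝ᵥ K22.mulVec v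
            + β ⬝ᵥ K11.mulVec u + γ ⬝ᵥ K21.mulVec u)
        + lam * (β ⬝ᵥ K11.mulVec β + 2 * (β ⬝ᵥ K12.mulVec γ) + γ ⬝ᵥ K22.mulVec γ)) :
    (∀ β γ dβ dγ : Fin n → ℝ,
        fderiv ℝ R (β, γ) (dβ, dγ)
          = 2 * (Sum.elim dβ dγ ⬝ᵥ
              (Matrix.fromBlocks K11 K12 K21 K22).mulVec
                (Sum.elim (u + lam • β)
                  (K21.mulVec β + K22.mulVec γ + v + lam • γ)))) ∧
    (∀ β γ : Fin n → ℝ,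
        fderiv ℝ R (β, γ) = 0 ↔
          β = -(lam⁻¹) • u ∧
            γ = -((K22 + lam • (1 : Matrix (Fin n) (Fin n) ℝ))⁻¹.mulVec
                  (K21.mulVec (-(lam⁻¹) • u) + v))) := by
  have hfun : R = fun p : (Fin n → ℝ) × (Fin n → ℝ) =>
      p.1 ⬝ᵥ (K12 * K21).mulVec p.1 + p.1 ⬝ᵥ (K12 * K22).mulVec p.2
        + p.2 ⬝ᵥ (K22 * K21).mulVec p.1 + p.2 ⬝ᵥ (K22 * K22).mulVec p.2
        + 2 * (p.1 ⬝ᵥ K12.mulVec v + p.2 ⬝ᵥ K22.mulVec v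
            + p.1 ⬝ᵥ K11.mulVec u + p.2 ⬝ᵥ K21.mulVec u)
        + lam * (p.1 ⬝ᵥ K11.mulVec p.1 + 2 * (p.1 ⬝ᵥ K12.mulVec p.2)
            + p.2 ⬝ᵥ K22.mulVec p.2) := funext fun p => hR p.1 p.2
  have hts := hsymm.eq
  rw [Matrix.fromBlocks_transpose] at hts
  have hT11 : K11ᵀ = K11 := by
    have := congrArg Matrix.toBlocks₁₁ hts
    simpa [Matrix.toBlocks_fromBlocks₁₁] using this
  have hT21 : K21ᵀ = K12 := by
    have := congrArg Matrix.toBlocks₁₂ hts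
    simpa [Matrix.toBlocks_fromBlocks₁₂] using this
  have hT12 : K12ᵀ = K21 := by
    have := congrArg Matrix.toBlocks₂₁ hts
    simpa [Matrix.toBlocks_fromBlocks₂₁] using this
  have hT22 : K22ᵀ = K22 := by
    have := congrArg Matrix.toBlocks₂₂ hts
    simpa [Matrix.toBlocks_fromBlocks₂₂] using this
  set fst := ContinuousLinearMap.fst ℝ (Fin n → ℝ) (Fin n → ℝ) with hfst
  set snd := ContinuousLinearMap.snd ℝ (Fin n → ℝ) (Fin n → ℝ) with hsnd
  have key : ∀ β γ dβ dγ : Fin n → ℝ,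
      fderiv ℝ R (β, γ) (dβ, dγ)
        = 2 * (dβ ⬝ᵥ (K11 *ᵥ (u + lam • β)
              + K12 *ᵥ (K21 *ᵥ β + K22 *ᵥ γ + v + lam • γ))
            + dγ ⬝ᵥ (K21 *ᵥ (u + lam • β)
              + K22 *ᵥ (K21 *ᵥ β + K22 *ᵥ γ + v + lam • γ))) := by
    intro β γ dβ dγ
    have H : HasFDerivAt R
        ((((dotCLM (K12*K21)).isBoundedBilinearMap).deriv (β, β)).comp (fst.prod fst)
          + (((dotCLM (K12*K22)).isBoundedBilinearMap).deriv (β, γ)).comp (fst.prod snd)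
          + (((dotCLM (K22*K21)).isBoundedBilinearMap).deriv (γ, β)).comp (snd.prod fst)
          + (((dotCLM (K22*K22)).isBoundedBilinearMap).deriv (γ, γ)).comp (snd.prod snd)
          + (2:ℝ) • ((dotC (K12 *ᵥ v)).comp fst + (dotC (K22 *ᵥ v)).comp snd
              + (dotC (K11 *ᵥ u)).comp fst + (dotC (K21 *ᵥ u)).comp snd)
          + lam • ((((dotCLM K11).isBoundedBilinearMap).deriv (β, β)).comp (fst.prod fst)
            + (2:ℝ) • ((((dotCLM K12).isBoundedBilinearMap).deriv (β, γ)).comp (fst.prod snd))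
            + (((dotCLM K22).isBoundedBilinearMap).deriv (γ, γ)).comp (snd.prod snd)))
        (β, γ) := by
      rw [hfun]
      have h1 := hasFDerivAt_dotfg (K12*K21) fst fst (β,γ)
      have h2 := hasFDerivAt_dotfg (K12*K22) fst snd (β,γ)
      have h3 := hasFDerivAt_dotfg (K22*K21) snd fst (β,γ)
      have h4 := hasFDerivAt_dotfg (K22*K22) snd snd (β,γ)
      have h5 := (((dotC (K12 *ᵥ v)).comp fst + (dotC (K22 *ᵥ v)).comp snd
          + (dotC (K11 *ᵥ u)).comp fst
          + (dotC (K21 *ᵥ u)).comp snd).hasFDerivAt (x := (β,γ))).const_mul (2:ℝ)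
      have h6 := ((((hasFDerivAt_dotfg K11 fst fst (β,γ)).add
          ((hasFDerivAt_dotfg K12 fst snd (β,γ)).const_mul (2:ℝ))).add
          (hasFDerivAt_dotfg K22 snd snd (β,γ))).const_mul lam)
      exact ((((h1.add h2).add h3).add h4).add h5).add h6
    rw [H.fderiv]
    simp only [ContinuousLinearMap.add_apply, ContinuousLinearMap.coe_comp',
      Function.comp_apply, ContinuousLinearMap.prod_apply, ContinuousLinearMap.smul_apply,
      ContinuousLinearMap.coe_fst', ContinuousLinearMap.coe_snd',
      IsBoundedBilinearMap.deriv_apply, dotCLM_apply, dotC_apply, smul_eq_mul,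
      hfst, hsnd]
    rw [flip_dot (K12*K21) β dβ, flip_dot (K12*K22) β dγ, flip_dot (K22*K21) γ dβ,
      flip_dot (K22*K22) γ dγ, flip_dot K11 β dβ, flip_dot K12 β dγ, flip_dot K22 γ dγ]
    simp only [Matrix.transpose_mul, hT11, hT12, hT21, hT22, Matrix.mulVec_add,
      Matrix.mulVec_smul, dotProduct_add, dotProduct_smul,
      Matrix.mulVec_mulVec, smul_eq_mul]
    ring
  constructor
  · intro β γ dβ dγ
    rw [key β γ dβ dγ, Matrix.fromBlocks_mulVec]
    simp only [Sum.elim_comp_inl, Sum.elim_comp_inr, sumElim_dotProduct_sumElim]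
  · intro β γ
    set a := u + lam • β with ha
    set b := K21 *ᵥ β + K22 *ᵥ γ + v + lam • γ with hb
    set A := K22 + lam • (1 : Matrix (Fin n) (Fin n) ℝ) with hA
    have hAexp : ∀ x : Fin n → ℝ, A *ᵥ x = K22 *ᵥ x + lam • x := by
      intro x
      rw [hA, Matrix.add_mulVec, Matrix.smul_mulVec, Matrix.one_mulVec]
    have hK22pos : ∀ x : Fin n → ℝ, x ≠ 0 → 0 < x ⬝ᵥ K22 *ᵥ x := by
      intro x hx
      have hs0 : Sum.elim (0 : Fin n → ℝ) x ≠ 0 := by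
        intro h
        apply hx
        funext i
        exact congrFun h (Sum.inr i)
      have := hposdef.dotProduct_mulVec_pos hs0
      simpa [Matrix.fromBlocks_mulVec, sumElim_dotProduct_sumElim,
        Matrix.mulVec_zero] using this
    have hApos : A.PosDef := by
      refine Matrix.PosDef.of_dotProduct_mulVec_pos ?_ ?_
      · show Aᴴ = A
        rw [Matrix.conjTranspose_eq_transpose_of_trivial, hA, Matrix.transpose_add,
          Matrix.transpose_smul, Matrix.transpose_one, hT22]
      · intro x hx
        have h1 : 0 < x ⬝ᵥ K22 *ᵥ x := hK22pos x hx
        have h2 : 0 ≤ x ⬝ᵥ x := Finset.sum_nonneg fun i _ => mul_self_nonneg (x i)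
        have hstar : star x = x := by simp
        rw [hstar, hAexp, dotProduct_add, dotProduct_smul, smul_eq_mul]
        nlinarith
    have hAdet : IsUnit A.det := isUnit_iff_ne_zero.mpr hApos.det_pos.ne'
    constructor
    · intro h0
      have hzero : ∀ dβ dγ : Fin n → ℝ,
          dβ ⬝ᵥ (K11 *ᵥ a + K12 *ᵥ b) + dγ ⬝ᵥ (K21 *ᵥ a + K22 *ᵥ b) = 0 := by
        intro dβ dγ
        have hk := key β γ dβ dγ
        rw [h0] at hk
        rw [← ha, ← hb] at hk
        simp only [ContinuousLinearMap.zero_apply] at hk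
        linarith [hk]
      have hg1z : K11 *ᵥ a + K12 *ᵥ b = 0 := by
        have := hzero (K11 *ᵥ a + K12 *ᵥ b) 0
        simp only [zero_dotProduct, add_zero] at this
        exact dotProduct_self_eq_zero.mp this
      have hg2z : K21 *ᵥ a + K22 *ᵥ b = 0 := by
        have := hzero 0 (K21 *ᵥ a + K22 *ᵥ b)
        simp only [zero_dotProduct, zero_add] at this
        exact dotProduct_self_eq_zero.mp this
      have hs : Sum.elim a b = 0 := by
        by_contra hs
        have hpos := hposdef.dotProduct_mulVec_pos hs
        have hKz : (Matrix.fromBlocks K11 K12 K21 K22) *ᵥ Sum.elim a b = 0 := by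
          rw [Matrix.fromBlocks_mulVec]
          simp only [Sum.elim_comp_inl, Sum.elim_comp_inr]
          rw [hg1z, hg2z]
          funext i; cases i <;> rfl
        rw [hKz] at hpos
        simp at hpos
      have haz : a = 0 := funext fun i => congrFun hs (Sum.inl i)
      have hbz : b = 0 := funext fun i => congrFun hs (Sum.inr i)
      have hβ : β = -lam⁻¹ • u := by
        have h1 : lam • β = -u := by
          rw [ha] at haz
          linear_combination (norm := module) haz
        have h2 : lam⁻¹ • (lam • β) = lam⁻¹ • (-u) := by rw [h1]
        rw [smul_smul, inv_mul_cancel₀ hlam.ne', one_smul] at h2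
        rw [h2, smul_neg, ← neg_smul]
      refine ⟨hβ, ?_⟩
      have hAb : A *ᵥ γ = -(K21 *ᵥ β + v) := by
        rw [hAexp, eq_neg_iff_add_eq_zero, ← hbz, hb]
        abel
      have hγ : γ = A⁻¹ *ᵥ (A *ᵥ γ) := by
        rw [Matrix.mulVec_mulVec, Matrix.nonsing_inv_mul A hAdet, Matrix.one_mulVec]
      rw [hγ, hAb, Matrix.mulVec_neg, hβ]
    · rintro ⟨hβ, hγ⟩
      have haz : a = 0 := by
        rw [ha, hβ]
        funext i
        simp [smul_eq_mul, mul_neg, ← mul_assoc, mul_inv_cancel₀ hlam.ne']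
      have hAb : A *ᵥ γ = -(K21 *ᵥ β + v) := by
        rw [hγ, ← hβ, Matrix.mulVec_neg, Matrix.mulVec_mulVec,
          Matrix.mul_nonsing_inv A hAdet, Matrix.one_mulVec]
      have hbz : b = 0 := by
        have h1 : K22 *ᵥ γ + lam • γ = -(K21 *ᵥ β + v) := by rw [← hAexp, hAb]
        rw [hb, show K21 *ᵥ β + K22 *ᵥ γ + v + lam • γ
            = (K22 *ᵥ γ + lam • γ) + (K21 *ᵥ β + v) by abel, h1, neg_add_cancel]
      apply ContinuousLinearMap.ext
      intro dp
      have hk := key β γ dp.1 dp.2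
      have hdp : (dp.1, dp.2) = dp := rfl
      rw [hdp] at hk
      rw [hk, ← ha, ← hb, haz, hbz]
      simp [Matrix.mulVec_zero]
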